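/- Let f : I ⊆ (0,∞) → ℝ be harmonically convex on [a,b] with a < b and f ∈ L¹[a,b], and α > 0. Then the first fractional Hermite–Hadamard inequality holds: f(2ab/(a+b)) ≤ (α/2) [∫_0^1 t^{α−1} f(ab/(tb+(1−t)a)) dt + ∫_0^1 t^{α−1} f(ab/(ta+(1−t)b)) dt]. -/

import Mathlib

/-!
With `g u = f u⁻¹`, harmonic convexity of `f` on `[a, b]` is ordinary convexity of `g` on
`[1/b, 1/a]`, and the two integrands become `g` along the segment `[1/b, 1/a]` traversed in
opposite directions. The two points at parameter `t` have midpoint `(1/a + 1/b)/2`, whose inverse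
is `2ab/(a+b)`, so midpoint convexity bounds `2 f(2ab/(a+b))` by the sum of the integrands;
integrating against `t^(α-1)`, whose integral over `[0, 1]` is `1/α`, gives the inequality. The
weighted integrals exist because a convex function on a compact interval is bounded and is
continuous in its interior.
-/

open MeasureTheory Set

def HarmonicallyConvexOn (s : Set ℝ) (f : ℝ → ℝ) : Prop :=
  ∀ x ∈ s, ∀ y ∈ s, ∀ t ∈ Icc (0 : ℝ) 1,
    f (x * y / (t * x + (1 - t) * y)) ≤ t * f y + (1 - t) * f x

lemma inv_mem_Icc_of_mem_Icc_inv {a b u : ℝ} (hb : 0 < b) (hu : u ∈ Icc b⁻¹ a⁻¹) :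
    u⁻¹ ∈ Icc a b := by
  have hu0 : 0 < u := (inv_pos.mpr hb).trans_le hu.1
  have ha : 0 < a := inv_pos.mp (hu0.trans_le hu.2)
  exact ⟨(le_inv_comm₀ ha hu0).mpr hu.2, (inv_le_comm₀ hu0 hb).mpr hu.1⟩

lemma HarmonicallyConvexOn.convexOn_comp_inv {f : ℝ → ℝ} {a b : ℝ} (hb : 0 < b)
    (hf : HarmonicallyConvexOn (Icc a b) f) : ConvexOn ℝ (Icc b⁻¹ a⁻¹) (fun u => f u⁻¹) := by
  refine ⟨convex_Icc _ _, fun u hu v hv s r hs hr hsr => ?_⟩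
  have hu0 : 0 < u := (inv_pos.mpr hb).trans_le hu.1
  have hv0 : 0 < v := (inv_pos.mpr hb).trans_le hv.1
  have key := hf v⁻¹ (inv_mem_Icc_of_mem_Icc_inv hb hv) u⁻¹ (inv_mem_Icc_of_mem_Icc_inv hb hu) s
    ⟨hs, by linarith⟩
  obtain rfl : r = 1 - s := by linarith
  have : v⁻¹ * u⁻¹ / (s * v⁻¹ + (1 - s) * u⁻¹) = (s * u + (1 - s) * v)⁻¹ := by
    field_simp
  simpa only [smul_eq_mul, this] using key

lemma ConvexOn.apply_midpoint_le {g : ℝ → ℝ} {s : Set ℝ} (hg : ConvexOn ℝ s g) {u v : ℝ}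
    (hu : u ∈ s) (hv : v ∈ s) : g ((u + v) / 2) ≤ (g u + g v) / 2 := by
  have := hg.2 hu hv (by norm_num : (0 : ℝ) ≤ 1 / 2) (by norm_num : (0 : ℝ) ≤ 1 / 2) (by norm_num)
  simp only [smul_eq_mul] at this
  calc g ((u + v) / 2) = g (1 / 2 * u + 1 / 2 * v) := by ring_nf
    _ ≤ 1 / 2 * g u + 1 / 2 * g v := this
    _ = (g u + g v) / 2 := by ring

lemma ConvexOn.comp_segment {g : ℝ → ℝ} {s : Set ℝ} (hg : ConvexOn ℝ s g) {u v : ℝ}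
    (hu : u ∈ s) (hv : v ∈ s) : ConvexOn ℝ (Icc 0 1) (fun t => g (t * u + (1 - t) * v)) := by
  have hmaps : Icc (0 : ℝ) 1 ⊆ AffineMap.lineMap v u ⁻¹' s := fun t ht =>
    hg.1.lineMap_mem hv hu ht
  have hline : g ∘ AffineMap.lineMap v u = fun t => g (t * u + (1 - t) * v) := by
    ext t
    rw [Function.comp_apply, AffineMap.lineMap_apply_ring]
    ring_nf
  simpa only [hline] using
    (hg.comp_affineMap (AffineMap.lineMap v u)).subset hmaps (convex_Icc 0 1)

lemma ConvexOn.exists_abs_le {h : ℝ → ℝ} {x y : ℝ} (hh : ConvexOn ℝ (Icc x y) h) :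
    ∃ C, ∀ z ∈ Icc x y, |h z| ≤ C := by
  rcases lt_or_ge y x with hxy | hxy
  · exact ⟨0, fun z hz => absurd (hz.1.trans hz.2) (not_le.mpr hxy)⟩
  refine ⟨|max (h x) (h y)| + 2 * |h ((x + y) / 2)|, fun z hz => abs_le.mpr ⟨?_, ?_⟩⟩
  -- `(x + y) / 2` is the midpoint of `z` and its reflection `x + y - z`.
  · have hz' : x + y - z ∈ Icc x y := ⟨by linarith [hz.2], by linarith [hz.1]⟩
    have hmid := hh.apply_midpoint_le hz hz'
    have hup := hh.le_max_of_mem_Icc (left_mem_Icc.mpr hxy) (right_mem_Icc.mpr hxy) hz'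
    rw [add_sub_cancel] at hmid
    linarith [le_abs_self (max (h x) (h y)), neg_abs_le (h ((x + y) / 2))]
  · have hup := hh.le_max_of_mem_Icc (left_mem_Icc.mpr hxy) (right_mem_Icc.mpr hxy) hz
    linarith [le_abs_self (max (h x) (h y)), abs_nonneg (h ((x + y) / 2))]

lemma ConvexOn.integrableOn_mul {h w : ℝ → ℝ} {x y : ℝ} (hh : ConvexOn ℝ (Icc x y) h)
    (hw : IntegrableOn w (Icc x y)) : IntegrableOn (fun t => w t * h t) (Icc x y) := by
  obtain ⟨C, hC⟩ := hh.exists_abs_le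
  have hmeas : AEStronglyMeasurable h (volume.restrict (Icc x y)) := by
    rw [Measure.restrict_congr_set Ioo_ae_eq_Icc.symm]
    have := hh.continuousOn_interior
    rw [interior_Icc] at this
    exact this.aestronglyMeasurable measurableSet_Ioo
  exact hw.mul_bdd hmeas ((ae_restrict_iff' measurableSet_Icc).mpr (.of_forall hC))

lemma ConvexOn.intervalIntegrable_rpow_mul {h : ℝ → ℝ} (hh : ConvexOn ℝ (Icc 0 1) h) {α : ℝ}
    (hα : 0 < α) : IntervalIntegrable (fun t => t ^ (α - 1) * h t) volume 0 1 := by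
  rw [intervalIntegrable_iff_integrableOn_Icc_of_le zero_le_one]
  refine hh.integrableOn_mul ?_
  rw [← intervalIntegrable_iff_integrableOn_Icc_of_le zero_le_one]
  exact intervalIntegral.intervalIntegrable_rpow' (by linarith)

lemma integral_rpow_sub_one_zero_one {α : ℝ} (hα : 0 < α) :
    ∫ t in (0 : ℝ)..1, t ^ (α - 1) = 1 / α := by
  rw [integral_rpow (Or.inl (by linarith))]
  simp [Real.zero_rpow hα.ne']

theorem ConvexOn.le_fractional_hermiteHadamard {g : ℝ → ℝ} {p q : ℝ} (hpq : p ≤ q)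
    (hg : ConvexOn ℝ (Icc p q) g) {α : ℝ} (hα : 0 < α) :
    g ((p + q) / 2) ≤
      α / 2 * ((∫ t in (0 : ℝ)..1, t ^ (α - 1) * g (t * q + (1 - t) * p)) +
        ∫ t in (0 : ℝ)..1, t ^ (α - 1) * g (t * p + (1 - t) * q)) := by
  have hp : p ∈ Icc p q := left_mem_Icc.mpr hpq
  have hq : q ∈ Icc p q := right_mem_Icc.mpr hpq
  have hint₁ := (hg.comp_segment hq hp).intervalIntegrable_rpow_mul hα
  have hint₂ := (hg.comp_segment hp hq).intervalIntegrable_rpow_mul hα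
  have hmid : ∀ t ∈ Icc (0 : ℝ) 1,
      t ^ (α - 1) * (2 * g ((p + q) / 2)) ≤
        t ^ (α - 1) * g (t * q + (1 - t) * p) + t ^ (α - 1) * g (t * p + (1 - t) * q) := by
    intro t ht
    have hsum : t + (1 - t) = 1 := add_sub_cancel t 1
    have h := hg.apply_midpoint_le (hg.1 hq hp ht.1 (sub_nonneg.2 ht.2) hsum)
      (hg.1 hp hq ht.1 (sub_nonneg.2 ht.2) hsum)
    simp only [smul_eq_mul] at h
    rw [show (t * q + (1 - t) * p + (t * p + (1 - t) * q)) / 2 = (p + q) / 2 by ring] at h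
    rw [← mul_add]
    exact mul_le_mul_of_nonneg_left (by linarith) (Real.rpow_nonneg ht.1 _)
  have hmono := intervalIntegral.integral_mono_on zero_le_one
    ((intervalIntegral.intervalIntegrable_rpow' (by linarith)).mul_const _) (hint₁.add hint₂) hmid
  rw [intervalIntegral.integral_mul_const, integral_rpow_sub_one_zero_one hα,
    intervalIntegral.integral_add hint₁ hint₂] at hmono
  calc g ((p + q) / 2) = α / 2 * (1 / α * (2 * g ((p + q) / 2))) := by field_simp
    _ ≤ _ := by gcongr

theorem stmt_5_general (f : ℝ → ℝ) (a b : ℝ) (ha : 0 < a) (hab : a < b)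
    (hf : ∀ x ∈ Set.Icc a b, ∀ y ∈ Set.Icc a b, ∀ t ∈ Set.Icc (0:ℝ) 1,
      f (x * y / (t * x + (1 - t) * y)) ≤ t * f y + (1 - t) * f x)
    (α : ℝ) (hα : 0 < α) :
    f (2 * a * b / (a + b)) ≤
      (α / 2) * ((∫ t in (0:ℝ)..1, t ^ (α - 1) * f (a * b / (t * b + (1 - t) * a))) +
        ∫ t in (0:ℝ)..1, t ^ (α - 1) * f (a * b / (t * a + (1 - t) * b))) := by
  have hb : 0 < b := ha.trans hab
  have key := (HarmonicallyConvexOn.convexOn_comp_inv hb hf).le_fractional_hermiteHadamard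
    ((inv_le_inv₀ hb ha).mpr hab.le) hα
  convert key using 4 <;> field_simp

theorem stmt_5 (f : ℝ → ℝ) (a b : ℝ) (ha : 0 < a) (hab : a < b)
    (hf : ∀ x ∈ Set.Icc a b, ∀ y ∈ Set.Icc a b, ∀ t ∈ Set.Icc (0:ℝ) 1,
      f (x * y / (t * x + (1 - t) * y)) ≤ t * f y + (1 - t) * f x)
    (hint : IntervalIntegrable f MeasureTheory.volume a b)
    (α : ℝ) (hα : 0 < α) :
    f (2 * a * b / (a + b)) ≤
      (α / 2) * ((∫ t in (0:ℝ)..1, t ^ (α - 1) * f (a * b / (t * b + (1 - t) * a))) +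
        ∫ t in (0:ℝ)..1, t ^ (α - 1) * f (a * b / (t * a + (1 - t) * b))) :=
  stmt_5_general f a b ha hab hf α hα
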